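/- arXiv:2309.02223 — 2 statements merged into one kernel-verified Lean document; each statement's English description precedes it below -/
import Mathlib

section
/- In the game G_n, the strategy τ_0 defined by τ_0(d_i)=d_{i+1} for i ≤ n and τ_0(d_{n+1})=a_{n+1} is admissible for player 1: every cycle avoiding the sink in the subgraph where player 1 follows τ_0 has odd highest priority. -/
structure PGame (V : Type) where
  E : V → V → Prop
  isP0 : V → Bool
  p : V → ℤ

namespace PGame

variable {V : Type}

/-- A valid positional strategy for player 0: at every player-0 node it follows an edge. -/
def Strat0Valid (G : PGame V) (σ : V → V) : Prop := ∀ v, G.isP0 v = true → G.E v (σ v)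

/-- A valid positional strategy for player 1. -/
def Strat1Valid (G : PGame V) (τ : V → V) : Prop := ∀ v, G.isP0 v = false → G.E v (τ v)

/-- Edges of the subgraph where player 0 follows `σ` (player 1 keeps all edges). -/
def E0 (G : PGame V) (σ : V → V) (v w : V) : Prop :=
  if G.isP0 v then w = σ v else G.E v w

/-- Edges of the subgraph where player 1 follows `τ` (player 0 keeps all edges). -/
def E1 (G : PGame V) (τ : V → V) (v w : V) : Prop :=
  if G.isP0 v then G.E v w else w = τ v

/-- A cycle of length `k` (given by a `k`-periodic sequence) in the relation `R`. -/
def IsCycle (R : V → V → Prop) (k : ℕ) (c : ℕ → V) : Prop :=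
  0 < k ∧ (∀ i, R (c i) (c (i + 1))) ∧ ∀ i, c (i + k) = c i

/-- The highest priority occurring on the (periodic) cycle `c` is even. -/
def TopEven (G : PGame V) (c : ℕ → V) : Prop :=
  ∃ i, Even (G.p (c i)) ∧ ∀ j, G.p (c j) ≤ G.p (c i)

/-- The highest priority occurring on the (periodic) cycle `c` is odd. -/
def TopOdd (G : PGame V) (c : ℕ → V) : Prop :=
  ∃ i, Odd (G.p (c i)) ∧ ∀ j, G.p (c j) ≤ G.p (c i)

/-- `σ` is an admissible player 0 strategy: valid, and every cycle avoiding the sink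
in the subgraph where player 0 follows `σ` has even highest priority. -/
def Admissible0 (G : PGame V) (top : V) (σ : V → V) : Prop :=
  G.Strat0Valid σ ∧ ∀ k c, IsCycle (G.E0 σ) k c → (∀ i, c i ≠ top) → G.TopEven c

/-- `τ` is an admissible player 1 strategy. -/
def Admissible1 (G : PGame V) (top : V) (τ : V → V) : Prop :=
  G.Strat1Valid τ ∧ ∀ k c, IsCycle (G.E1 τ) k c → (∀ i, c i ≠ top) → G.TopOdd c

/-- `top` is a sink node: unique smallest priority and only the self-loop as outgoing edge. -/
def IsSink (G : PGame V) (top : V) : Prop :=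
  (∀ v, v ≠ top → G.p top < G.p v) ∧ (∀ w, G.E top w ↔ w = top)

/-- A sink parity game. -/
def IsSinkGame (G : PGame V) (top : V) : Prop :=
  G.IsSink top ∧ (∃ σ, G.Admissible0 top σ) ∧ (∃ τ, G.Admissible1 top τ)

/-- One move when both players play their positional strategies. -/
def step (G : PGame V) (σ τ : V → V) (v : V) : V := if G.isP0 v then σ v else τ v

/-- The play from `v` under the strategies `σ`, `τ`. -/
def play (G : PGame V) (σ τ : V → V) (v : V) (n : ℕ) : V := (G.step σ τ)^[n] v

end PGame
/-- Nodes of the game `G_n`: `(true, i)` is `a_i`, `(false, i)` is `d_i` (for `1 ≤ i ≤ n+1`);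
other indices are junk nodes that just move to the sink `a_{n+1}`. -/
abbrev VN : Type := Bool × ℕ

/-- Priorities of `G_n`: `p(a_i) = 2i+1` for `i ≤ n`, `p(a_{n+1}) = 1`,
`p(d_i) = 2i+2` (so `p(d_{n+1}) = 2n+4`). -/
def pN (n : ℕ) : VN → ℤ
  | (true, i) => if 1 ≤ i ∧ i ≤ n then 2 * (i : ℤ) + 1 else 1
  | (false, i) => if 1 ≤ i ∧ i ≤ n + 1 then 2 * (i : ℤ) + 2 else 1

/-- Edges of `G_n`: `a_1 → a_2, d_2`; `a_i → a_1, a_{i+1}, d_{i+1}` for `2 ≤ i ≤ n`;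
`a_{n+1} → a_{n+1}` (sink); `d_1 → a_2, d_2`; `d_i → d_1, a_{i+1}, d_{i+1}` for `2 ≤ i ≤ n`;
`d_{n+1} → a_{n+1}`. -/
def EN (n : ℕ) : VN → VN → Prop
  | (true, i), w =>
      if i = n + 1 then w = (true, n + 1)
      else if i = 1 then w = (true, 2) ∨ w = (false, 2)
      else if 2 ≤ i ∧ i ≤ n then w = (true, 1) ∨ w = (true, i + 1) ∨ w = (false, i + 1)
      else w = (true, n + 1)
  | (false, i), w =>
      if i = n + 1 then w = (true, n + 1)
      else if i = 1 then w = (true, 2) ∨ w = (false, 2)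
      else if 2 ≤ i ∧ i ≤ n then w = (false, 1) ∨ w = (true, i + 1) ∨ w = (false, i + 1)
      else w = (true, n + 1)

/-- The game `G_n`: `a`-nodes belong to player 0, `d`-nodes to player 1. -/
def GameN (n : ℕ) : PGame VN := ⟨EN n, Prod.fst, pN n⟩

/-- The initial player 0 strategy: `σ₀(a_i) = a_{i+1}` for `i ≤ n`, `σ₀(a_{n+1}) = a_{n+1}`. -/
def sigma0 (n : ℕ) : VN → VN
  | (true, i) => if 1 ≤ i ∧ i ≤ n then (true, i + 1) else (true, n + 1)
  | (false, _) => (true, n + 1)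

/-- The initial player 1 strategy: `τ₀(d_i) = d_{i+1}` for `i ≤ n`, `τ₀(d_{n+1}) = a_{n+1}`. -/
def tau0 (n : ℕ) : VN → VN
  | (false, i) => if 1 ≤ i ∧ i ≤ n then (false, i + 1) else (true, n + 1)
  | (true, _) => (true, n + 1)

/-! Player 1's nodes `d_m` are left by `τ₀` only upwards along `d_m → d_{m+1}`, ending in the
sink, so a cycle avoiding the sink consists of `a`-nodes only, and these all have odd priority. -/

namespace PGame

variable {V : Type}

theorem IsCycle.apply_mod {R : V → V → Prop} {k : ℕ} {c : ℕ → V} (hc : IsCycle R k c) (j : ℕ) :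
    c j = c (j % k) := by
  have hmul : ∀ q r, c (r + k * q) = c r := by
    intro q r
    induction q with
    | zero => simp
    | succ q ih => rw [Nat.mul_succ, ← Nat.add_assoc, hc.2.2, ih]
  conv_lhs => rw [← Nat.mod_add_div j k]
  exact hmul _ _

theorem IsCycle.exists_max_image {α : Type} [LinearOrder α] {R : V → V → Prop} {k : ℕ}
    {c : ℕ → V} (hc : IsCycle R k c) (f : V → α) : ∃ i, ∀ j, f (c j) ≤ f (c i) := by
  obtain ⟨i, -, hmax⟩ :=
    Finset.exists_max_image (Finset.range k) (f ∘ c) ⟨0, Finset.mem_range.mpr hc.1⟩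
  refine ⟨i, fun j => ?_⟩
  rw [hc.apply_mod j]
  exact hmax _ (Finset.mem_range.mpr (Nat.mod_lt j hc.1))

theorem topOdd_of_forall_odd {G : PGame V} {R : V → V → Prop} {k : ℕ} {c : ℕ → V}
    (hc : IsCycle R k c) (hodd : ∀ i, Odd (G.p (c i))) : G.TopOdd c :=
  let ⟨i, hi⟩ := hc.exists_max_image G.p
  ⟨i, hodd i, hi⟩

end PGame

theorem odd_pN_true (n i : ℕ) : Odd (pN n (true, i)) := by
  simp only [pN]
  split_ifs
  · exact ⟨i, by ring⟩
  · exact odd_one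

theorem tau0_strat1Valid (n : ℕ) : (GameN n).Strat1Valid (tau0 n) := by
  rintro ⟨b, i⟩ (rfl : b = false)
  show EN n (false, i) (tau0 n (false, i))
  simp only [EN, tau0]
  split_ifs <;> first | omega | simp_all

theorem E1_tau0_false {n m : ℕ} {w : VN} (h : (GameN n).E1 (tau0 n) (false, m) w)
    (hw : w ≠ (true, n + 1)) : m ≤ n ∧ w = (false, m + 1) := by
  simp only [PGame.E1, GameN, Bool.false_eq_true, if_false, tau0] at h
  split_ifs at h with hm
  · exact ⟨hm.2, h⟩
  · exact absurd h hw

theorem fst_eq_true_of_avoids_sink {n : ℕ} {c : ℕ → VN}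
    (hstep : ∀ i, (GameN n).E1 (tau0 n) (c i) (c (i + 1))) (hne : ∀ i, c i ≠ (true, n + 1))
    (j : ℕ) : (c j).1 = true := by
  rcases hcj : c j with ⟨_ | _, m⟩
  · have climb : ∀ t, c (j + t) = (false, m + t) ∧ m + t ≤ n := by
      intro t
      induction t with
      | zero => exact ⟨hcj, (E1_tau0_false (hcj ▸ hstep j) (hne _)).1⟩
      | succ t ih =>
        have hnext := E1_tau0_false (ih.1 ▸ hstep (j + t)) (hne _)
        exact ⟨hnext.2, (E1_tau0_false (hnext.2 ▸ hstep (j + t + 1)) (hne _)).1⟩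
    have := (climb (n + 1)).2
    omega
  · rfl

theorem stmt10_general (n : ℕ) :
    (GameN n).Admissible1 (true, n + 1) (tau0 n) := by
  refine ⟨tau0_strat1Valid n, fun k c hc hne => PGame.topOdd_of_forall_odd hc fun i => ?_⟩
  have hci : c i = (true, (c i).2) := Prod.ext (fst_eq_true_of_avoids_sink hc.2.1 hne i) rfl
  rw [hci]
  exact odd_pN_true n _

/-- In `G_n`, the initial strategy `τ₀` (with `τ₀(d_i) = d_{i+1}` and
`τ₀(d_{n+1}) = a_{n+1}`) is admissible for player 1: every cycle avoiding the sink
in the subgraph where player 1 follows `τ₀` has odd highest priority. -/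
theorem stmt10 (n : ℕ) (hn : 1 ≤ n) :
    (GameN n).Admissible1 (true, n + 1) (tau0 n) :=
  stmt10_general n
end

section
/- In G_n with σ(a_j)=a_{j+1} and τ(d_j)=d_{j+1}: the edge (a_j,a_1) is an improving move for σ only if σ(a_i)=a_{i+1} for all i < j-1 and σ(a_{j-1})=d_j; and the edge (d_j,d_1) is never an improving move for τ. -/
/-- Play values: `-∞`, a nonnegative integer vector indexed by priorities, or `∞`. -/
inductive EV : Type where
  | neg : EV
  | fin : (ℤ → ℕ) → EV
  | pos : EV

/-- The strict comparison `B ◁ C` on vectors: at the largest priority `q` where they differ,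
either `q` is even and `B q < C q`, or `q` is odd and `B q > C q`. -/
def vlt (B C : ℤ → ℕ) : Prop :=
  ∃ q : ℤ, B q ≠ C q ∧ (∀ r : ℤ, q < r → B r = C r) ∧
    ((Even q ∧ B q < C q) ∨ (Odd q ∧ C q < B q))

/-- The strict order `◁` extended with `-∞` as least and `∞` as greatest element. -/
def elt : EV → EV → Prop
  | EV.neg, EV.neg => False
  | EV.neg, _ => True
  | EV.fin B, EV.fin C => vlt B C
  | EV.fin _, EV.pos => True
  | _, _ => False

/-- The non-strict order `⊴`. -/
def ele (x y : EV) : Prop := elt x y ∨ x = y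

/-- Priority `q` is seen infinitely often along the play from `v`. -/
def InfOft {V : Type} (G : PGame V) (σ τ : V → V) (v : V) (q : ℤ) : Prop :=
  ∀ n, ∃ m, n ≤ m ∧ G.p (G.play σ τ v m) = q

open Classical in
/-- The play value `Θ_{σ,τ}(v)`: if the play reaches the sink `top`, the vector counting
for each priority how often it occurs before reaching `top`; otherwise `∞` or `-∞`
according to the parity of the highest priority seen infinitely often. -/
noncomputable def theta {V : Type} (G : PGame V) (top : V) (σ τ : V → V) (v : V) : EV :=
  if h : ∃ n, G.play σ τ v n = top then
    EV.fin (fun q => ((Finset.range (Nat.find h)).filter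
      (fun j => G.p (G.play σ τ v j) = q)).card)
  else if ∃ q, InfOft G σ τ v q ∧ Even q ∧ ∀ q', InfOft G σ τ v q' → q' ≤ q
    then EV.pos else EV.neg

/-- `τbar` is an optimal counterstrategy of player 1 against `σ`: it minimizes `Θ_{σ,·}`
pointwise with respect to `⊴`. The valuation is `Ξ_σ = Θ_{σ,τbar}`. -/
def OptCounter1 {V : Type} (G : PGame V) (top : V) (σ τbar : V → V) : Prop :=
  G.Strat1Valid τbar ∧
    ∀ τ, G.Strat1Valid τ → ∀ v, ele (theta G top σ τbar v) (theta G top σ τ v)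

/-- `σbar` is an optimal counterstrategy of player 0 against `τ`: it maximizes `Θ_{·,τ}`
pointwise with respect to `⊴`. The valuation is `Ξ_τ = Θ_{σbar,τ}`. -/
def OptCounter0 {V : Type} (G : PGame V) (top : V) (τ σbar : V → V) : Prop :=
  G.Strat0Valid σbar ∧
    ∀ σ, G.Strat0Valid σ → ∀ v, ele (theta G top σ τ v) (theta G top σbar τ v)
/-!
Admissible strategies of the two players always lead to the sink: a cycle avoiding it would
have a highest priority that is both even and odd. Hence an optimal counterstrategy against an
admissible strategy reaches the sink from everywhere too, and its valuation `Ξ` is a vector of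
priority counts with `Ξ v = e_{p v} + Ξ (next v)`. Redirecting a node `v` of the optimising player
to `w` either yields the value `e_{p v} + Ξ w` or closes a cycle whose highest priority favours
the opponent, so the optimiser's value at `v` is at least as good as `e_{p v} + Ξ w`.

If the switch `(a_j, a_1)` improves `σ`, then `Ξ a_1 ⊴ Ξ v + E`, with `E` carried by priorities at
most `2j + 1`, for every `v` reached from `a_1` by following `σ` at the `a_i` and any edge at the
`d_i` (`i < j`). This fails at `a_j`: there `Ξ a_j = e_{2j+1} + Ξ a_{j+1}`, and the odd priority
`2j + 1` would give `Ξ a_1 ◁ Ξ a_{j+1}`. So `σ` can neither leave the chain `a_1, …, a_{j-1}` for a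
`d_{i+1}` (player 1 would climb the `d`-chain to `a_j`) nor return to `a_1` (an `a`-cycle, whose
priorities are odd), and `σ(a_{j-1}) = d_j`. With the roles of `a` and `d` exchanged the same
argument reaches `d_j` from `d_1`, where the even priority `2j + 2` contradicts an improving
switch `(d_j, d_1)`.
-/

section PriorityVectors

def IsTopPriority (D : ℤ → ℕ) (q : ℤ) : Prop := D q ≠ 0 ∧ ∀ r, q < r → D r = 0

theorem isTopPriority_single_add {E : ℤ → ℕ} {q : ℤ} (hE : ∀ r, q < r → E r = 0) :
    IsTopPriority (Pi.single q 1 + E) q :=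
  ⟨by simp, fun r hr => by simp [hr.ne', hE r hr]⟩

theorem vlt_irrefl (B : ℤ → ℕ) : ¬ vlt B B := fun ⟨_, h, _⟩ => h rfl

theorem vlt_trans {B C D : ℤ → ℕ} (h₁ : vlt B C) (h₂ : vlt C D) : vlt B D := by
  obtain ⟨q₁, hne₁, hup₁, hd₁⟩ := h₁
  obtain ⟨q₂, hne₂, hup₂, hd₂⟩ := h₂
  rcases lt_trichotomy q₁ q₂ with h | rfl | h
  · exact ⟨q₂, hup₁ q₂ h ▸ hne₂, fun r hr => (hup₁ r (h.trans hr)).trans (hup₂ r hr),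
      hup₁ q₂ h ▸ hd₂⟩
  · have hup : ∀ r, q₁ < r → B r = D r := fun r hr => (hup₁ r hr).trans (hup₂ r hr)
    rcases hd₁ with ⟨he, h₁⟩ | ⟨ho, h₁⟩ <;> rcases hd₂ with ⟨he', h₂⟩ | ⟨ho', h₂⟩
    · exact ⟨q₁, by omega, hup, Or.inl ⟨he, h₁.trans h₂⟩⟩
    · exact absurd he (Int.not_even_iff_odd.mpr ho')
    · exact absurd he' (Int.not_even_iff_odd.mpr ho)
    · exact ⟨q₁, by omega, hup, Or.inr ⟨ho, h₂.trans h₁⟩⟩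
  · exact ⟨q₁, (hup₂ q₁ h).symm ▸ hne₁, fun r hr => (hup₁ r hr).trans (hup₂ r (h.trans hr)),
      (hup₂ q₁ h).symm ▸ hd₁⟩

theorem vlt_asymm {B C : ℤ → ℕ} (h : vlt B C) : ¬ vlt C B :=
  fun h' => vlt_irrefl B (vlt_trans h h')

theorem vlt_add_right {B C : ℤ → ℕ} (h : vlt B C) (D : ℤ → ℕ) : vlt (B + D) (C + D) := by
  obtain ⟨q, hne, hup, hd⟩ := h
  exact ⟨q, by simpa using hne, fun r hr => by simp [hup r hr], by simpa using hd⟩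

theorem vlt_self_add {D : ℤ → ℕ} {q : ℤ} (hq : IsTopPriority D q) (he : Even q) (B : ℤ → ℕ) :
    vlt B (B + D) :=
  ⟨q, by simpa [eq_comm] using hq.1, fun r hr => by simp [hq.2 r hr],
    Or.inl ⟨he, by simpa [Nat.pos_iff_ne_zero] using hq.1⟩⟩

theorem vlt_add_self {D : ℤ → ℕ} {q : ℤ} (hq : IsTopPriority D q) (ho : Odd q) (B : ℤ → ℕ) :
    vlt (B + D) B :=
  ⟨q, by simpa using hq.1, fun r hr => by simp [hq.2 r hr],
    Or.inr ⟨ho, by simpa [Nat.pos_iff_ne_zero] using hq.1⟩⟩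

theorem elt_trans {x y z : EV} (h₁ : elt x y) (h₂ : elt y z) : elt x z := by
  cases x <;> cases y <;> cases z <;> first | exact vlt_trans h₁ h₂ | simp_all [elt]

theorem ele_trans {x y z : EV} (h₁ : ele x y) (h₂ : ele y z) : ele x z := by
  rcases h₁ with h₁ | rfl
  · rcases h₂ with h₂ | rfl
    · exact Or.inl (elt_trans h₁ h₂)
    · exact Or.inl h₁
  · exact h₂

theorem ele_fin_add_right {B C : ℤ → ℕ} (h : ele (.fin B) (.fin C)) (D : ℤ → ℕ) :
    ele (.fin (B + D)) (.fin (C + D)) := by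
  rcases h with h | h
  · exact Or.inl (vlt_add_right h D)
  · cases h; exact Or.inr rfl

theorem vlt_of_ele_of_vlt {A B C : ℤ → ℕ} (h₁ : ele (.fin A) (.fin B)) (h₂ : vlt B C) :
    vlt A C := by
  rcases h₁ with h₁ | h₁
  · exact vlt_trans h₁ h₂
  · cases h₁; exact h₂

theorem vlt_of_vlt_of_ele {A B C : ℤ → ℕ} (h₁ : vlt A B) (h₂ : ele (.fin B) (.fin C)) :
    vlt A C := by
  rcases h₂ with h₂ | h₂
  · exact vlt_trans h₁ h₂
  · cases h₂; exact h₁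

def LeUpTo (q : ℤ) (A C : ℤ → ℕ) : Prop :=
  ∃ E : ℤ → ℕ, (∀ r, q < r → E r = 0) ∧ ele (.fin A) (.fin (C + E))

def GeUpTo (q : ℤ) (A C : ℤ → ℕ) : Prop :=
  ∃ E : ℤ → ℕ, (∀ r, q < r → E r = 0) ∧ ele (.fin (C + E)) (.fin A)

theorem LeUpTo.refl (q : ℤ) (A : ℤ → ℕ) : LeUpTo q A A :=
  ⟨0, fun _ _ => rfl, Or.inr (by simp)⟩

theorem GeUpTo.refl (q : ℤ) (A : ℤ → ℕ) : GeUpTo q A A :=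
  ⟨0, fun _ _ => rfl, Or.inr (by simp)⟩

theorem LeUpTo.trans_ele {q p : ℤ} {A B C : ℤ → ℕ} (h : LeUpTo q A B)
    (hB : ele (.fin B) (.fin (Pi.single p 1 + C))) (hp : p ≤ q) : LeUpTo q A C := by
  obtain ⟨E, hE, hA⟩ := h
  refine ⟨Pi.single p 1 + E, fun r hr => ?_, ele_trans hA ?_⟩
  · simp [(hp.trans_lt hr).ne', hE r hr]
  · rw [← add_assoc, add_comm C]
    exact ele_fin_add_right hB E

theorem GeUpTo.trans_ele {q p : ℤ} {A B C : ℤ → ℕ} (h : GeUpTo q A B)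
    (hB : ele (.fin (Pi.single p 1 + C)) (.fin B)) (hp : p ≤ q) : GeUpTo q A C := by
  obtain ⟨E, hE, hA⟩ := h
  refine ⟨Pi.single p 1 + E, fun r hr => ?_, ele_trans ?_ hA⟩
  · simp [(hp.trans_lt hr).ne', hE r hr]
  · rw [← add_assoc, add_comm C]
    exact ele_fin_add_right hB E

theorem LeUpTo.vlt_of_odd {q : ℤ} {A C : ℤ → ℕ} (h : LeUpTo q A (Pi.single q 1 + C))
    (ho : Odd q) : vlt A C := by
  obtain ⟨E, hE, hA⟩ := h
  rw [add_comm (Pi.single q 1), add_assoc] at hA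
  exact vlt_of_ele_of_vlt hA (vlt_add_self (isTopPriority_single_add hE) ho C)

theorem GeUpTo.vlt_of_even {q : ℤ} {A C : ℤ → ℕ} (h : GeUpTo q A (Pi.single q 1 + C))
    (he : Even q) : vlt C A := by
  obtain ⟨E, hE, hA⟩ := h
  rw [add_comm (Pi.single q 1), add_assoc] at hA
  exact vlt_of_vlt_of_ele (vlt_self_add (isTopPriority_single_add hE) he C) hA

end PriorityVectors

namespace PGame

variable {V : Type} {G : PGame V} {top : V} {σ τ σ' τ' : V → V}

open Function

theorem play_add (v : V) (a b : ℕ) :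
    G.play σ τ v (a + b) = G.play σ τ (G.play σ τ v a) b := by
  rw [play, add_comm, iterate_add_apply]; rfl

theorem play_succ (v : V) (m : ℕ) : G.play σ τ v (m + 1) = G.step σ τ (G.play σ τ v m) :=
  iterate_succ_apply' _ _ _

theorem E_step (hσ : G.Strat0Valid σ) (hτ : G.Strat1Valid τ) (v : V) :
    G.E v (G.step σ τ v) := by
  unfold step
  cases h : G.isP0 v
  · exact hτ v h
  · exact hσ v h

theorem E0_step (hτ : G.Strat1Valid τ) (u : V) : G.E0 σ u (G.step σ τ u) := by
  unfold E0 step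
  cases h : G.isP0 u
  · simpa [h] using hτ u h
  · simp

theorem E1_step (hσ : G.Strat0Valid σ) (u : V) : G.E1 τ u (G.step σ τ u) := by
  unfold E1 step
  cases h : G.isP0 u
  · simp
  · simpa [h] using hσ u h

theorem step_update_left [DecidableEq V] {v w : V} (hv : G.isP0 v = true) :
    G.step (update σ v w) τ = update (G.step σ τ) v w := by
  funext u
  by_cases hu : u = v
  · subst hu; simp [step, hv]
  · simp only [step, update_of_ne hu]

theorem step_update_right [DecidableEq V] {v w : V} (hv : G.isP0 v = false) :
    G.step σ (update τ v w) = update (G.step σ τ) v w := by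
  funext u
  by_cases hu : u = v
  · subst hu; simp [step, hv]
  · simp only [step, update_of_ne hu]

theorem Strat0Valid.update [DecidableEq V] (hσ : G.Strat0Valid σ) {v w : V} (hvw : G.E v w) :
    G.Strat0Valid (Function.update σ v w) := by
  intro u hu
  by_cases h : u = v
  · subst h; simpa using hvw
  · simpa [h] using hσ u hu

theorem Strat1Valid.update [DecidableEq V] (hτ : G.Strat1Valid τ) {v w : V} (hvw : G.E v w) :
    G.Strat1Valid (Function.update τ v w) := by
  intro u hu
  by_cases h : u = v
  · subst h; simpa using hvw
  · simpa [h] using hτ u hu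

theorem exists_isPeriodicPt_play (hfin : {w | ∃ u, G.E u w}.Finite)
    (hσ : G.Strat0Valid σ) (hτ : G.Strat1Valid τ) (v : V) :
    ∃ s k, 0 < k ∧ IsPeriodicPt (G.step σ τ) k (G.play σ τ v s) := by
  have hmem (m : ℕ) : G.play σ τ v (m + 1) ∈ {w | ∃ u, G.E u w} :=
    ⟨G.play σ τ v m, play_succ (G := G) v m ▸ E_step hσ hτ _⟩
  obtain ⟨a, b, hab, he⟩ := Set.Finite.exists_lt_map_eq_of_forall_mem hmem hfin
  refine ⟨a + 1, b - a, by omega, ?_⟩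
  change G.play σ τ (G.play σ τ v (a + 1)) (b - a) = _
  rw [← play_add, show a + 1 + (b - a) = b + 1 by omega]
  exact he.symm

theorem isCycle_E0 (hτ : G.Strat1Valid τ) {k : ℕ} {x : V} (hk : 0 < k)
    (hx : IsPeriodicPt (G.step σ τ) k x) :
    IsCycle (G.E0 σ) k (G.play σ τ x) := by
  refine ⟨hk, fun i => ?_, fun i => by simp only [play, iterate_add_apply, hx.eq]⟩
  simpa only [play_succ] using E0_step hτ _

theorem isCycle_E1 (hσ : G.Strat0Valid σ) {k : ℕ} {x : V} (hk : 0 < k)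
    (hx : IsPeriodicPt (G.step σ τ) k x) :
    IsCycle (G.E1 τ) k (G.play σ τ x) := by
  refine ⟨hk, fun i => ?_, fun i => by simp only [play, iterate_add_apply, hx.eq]⟩
  simpa only [play_succ] using E1_step hσ _

theorem iterate_ne_of_isPeriodicPt {f : V → V} (hf : f top = top) {k : ℕ} {x : V} (hk : 0 < k)
    (hx : IsPeriodicPt f k x) (hxtop : x ≠ top) (i : ℕ) : f^[i] x ≠ top := by
  intro hi
  apply hxtop
  have hki : i ≤ k * i := Nat.le_mul_of_pos_left i hk
  rw [← (hx.mul_const i).eq, ← Nat.sub_add_cancel hki, iterate_add_apply, hi,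
    iterate_fixed hf]

theorem iterate_update_eq [DecidableEq V] {f : V → V} {x v w : V} {t : ℕ}
    (h : ∀ t' < t, f^[t'] x ≠ v) :
    (update f v w)^[t] x = f^[t] x := by
  induction t with
  | zero => rfl
  | succ t ih =>
    rw [iterate_succ_apply', iterate_succ_apply', ih fun t' ht' => h t' (by omega),
      update_of_ne (h t (by omega))]

def visitCount (G : PGame V) (c : ℕ → V) (m : ℕ) : ℤ → ℕ :=
  ∑ t ∈ Finset.range m, Pi.single (G.p (c t)) 1

theorem visitCount_add (c : ℕ → V) (m N : ℕ) :
    G.visitCount c (m + N) = G.visitCount c m + G.visitCount (fun t => c (m + t)) N :=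
  Finset.sum_range_add _ _ _

theorem visitCount_succ' (c : ℕ → V) (m : ℕ) :
    G.visitCount c (m + 1) = G.visitCount (fun t => c (t + 1)) m + Pi.single (G.p (c 0)) 1 :=
  Finset.sum_range_succ' _ _

theorem visitCount_one (c : ℕ → V) : G.visitCount c 1 = Pi.single (G.p (c 0)) 1 :=
  Finset.sum_range_one _

theorem visitCount_congr {c c' : ℕ → V} {m : ℕ} (h : ∀ t < m, c t = c' t) :
    G.visitCount c m = G.visitCount c' m :=
  Finset.sum_congr rfl fun t ht => by rw [h t (Finset.mem_range.1 ht)]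

theorem isTopPriority_visitCount {c : ℕ → V} {k i : ℕ} (hk : 0 < k) (hc : Periodic c k)
    (hmax : ∀ j, G.p (c j) ≤ G.p (c i)) : IsTopPriority (G.visitCount c k) (G.p (c i)) := by
  simp only [IsTopPriority, visitCount, Finset.sum_apply]
  refine ⟨fun h => ?_, fun r hr => Finset.sum_eq_zero fun t _ =>
    Pi.single_eq_of_ne ((hmax t).trans_lt hr).ne' _⟩
  have := (Finset.sum_eq_zero_iff.1 h) (i % k) (Finset.mem_range.2 (Nat.mod_lt i hk))
  simp [hc.map_mod_nat] at this

theorem theta_eq_fin {v : V} {m : ℕ} (hm : G.play σ τ v m = top)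
    (hlt : ∀ t < m, G.play σ τ v t ≠ top) :
    theta G top σ τ v = .fin (G.visitCount (G.play σ τ v) m) := by
  have h : ∃ n, G.play σ τ v n = top := ⟨m, hm⟩
  classical
  rw [theta, dif_pos h, (Nat.find_eq_iff h).2 ⟨hm, hlt⟩]
  congr 1
  funext q
  rw [Finset.card_filter, visitCount, Finset.sum_apply]
  exact Finset.sum_congr rfl fun t _ => by simp [Pi.single_apply, eq_comm]

theorem exists_theta_eq_fin {v : V} (h : ∃ m, G.play σ τ v m = top) :
    ∃ B, theta G top σ τ v = .fin B := by
  classical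
  exact ⟨_, theta_eq_fin (Nat.find_spec h) fun t => Nat.find_min h⟩

theorem exists_hitting_of_theta_eq_fin {v : V} {B : ℤ → ℕ} (h : theta G top σ τ v = .fin B) :
    ∃ m, G.play σ τ v m = top ∧ (∀ t < m, G.play σ τ v t ≠ top) ∧
      B = G.visitCount (G.play σ τ v) m := by
  classical
  by_cases hr : ∃ n, G.play σ τ v n = top
  · rw [theta_eq_fin (Nat.find_spec hr) fun t => Nat.find_min hr] at h
    exact ⟨_, Nat.find_spec hr, fun t => Nat.find_min hr, (EV.fin.inj h).symm⟩
  · rw [theta, dif_neg hr] at h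
    split_ifs at h

theorem theta_shift {v : V} {m : ℕ} {B : ℤ → ℕ}
    (hB : theta G top σ τ (G.play σ τ v m) = .fin B) (hlt : ∀ t < m, G.play σ τ v t ≠ top) :
    theta G top σ τ v = .fin (G.visitCount (G.play σ τ v) m + B) := by
  obtain ⟨N, hN, hNlt, rfl⟩ := exists_hitting_of_theta_eq_fin hB
  rw [← play_add] at hN
  have hlt' : ∀ t < m + N, G.play σ τ v t ≠ top := by
    intro t ht
    rcases lt_or_ge t m with htm | htm
    · exact hlt t htm
    · obtain ⟨t', rfl⟩ := Nat.exists_eq_add_of_le htm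
      rw [play_add]
      exact hNlt t' (by omega)
  rw [theta_eq_fin hN hlt', visitCount_add]
  simp only [play_add]

theorem theta_step {v : V} {B : ℤ → ℕ} (hB : theta G top σ τ (G.step σ τ v) = .fin B)
    (hv : v ≠ top) : theta G top σ τ v = .fin (Pi.single (G.p v) 1 + B) := by
  have h := theta_shift (m := 1) hB fun t ht => Nat.lt_one_iff.1 ht ▸ hv
  rwa [visitCount_one] at h

theorem theta_congr {v v' : V} (h : G.play σ τ v = G.play σ' τ' v') :
    theta G top σ τ v = theta G top σ' τ' v' := by
  unfold theta InfOft
  rw [h]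

theorem infOft_iff {v : V} {s k : ℕ} {q : ℤ} (hk : 0 < k)
    (hx : IsPeriodicPt (G.step σ τ) k (G.play σ τ v s)) :
    InfOft G σ τ v q ↔ ∃ i, G.p (G.play σ τ (G.play σ τ v s) i) = q := by
  constructor
  · intro h
    obtain ⟨m, hm, hq⟩ := h s
    obtain ⟨i, rfl⟩ := Nat.exists_eq_add_of_le hm
    exact ⟨i, by rwa [play_add] at hq⟩
  · rintro ⟨i, rfl⟩ N
    refine ⟨s + (i + k * N), by nlinarith, ?_⟩
    rw [play_add, add_comm i, play_add,
      show G.play σ τ (G.play σ τ v s) (k * N) = G.play σ τ v s from (hx.mul_const N).eq]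

theorem theta_eq_pos {v : V} {s k : ℕ} (hreach : ∀ m, G.play σ τ v m ≠ top) (hk : 0 < k)
    (hx : IsPeriodicPt (G.step σ τ) k (G.play σ τ v s))
    (he : G.TopEven (G.play σ τ (G.play σ τ v s))) : theta G top σ τ v = .pos := by
  obtain ⟨i₀, heven, hmax⟩ := he
  rw [theta, dif_neg (not_exists.2 hreach), if_pos]
  refine ⟨_, (infOft_iff hk hx).2 ⟨i₀, rfl⟩, heven, fun q hq => ?_⟩
  obtain ⟨i, rfl⟩ := (infOft_iff hk hx).1 hq
  exact hmax i

theorem theta_eq_neg {v : V} {s k : ℕ} (hreach : ∀ m, G.play σ τ v m ≠ top) (hk : 0 < k)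
    (hx : IsPeriodicPt (G.step σ τ) k (G.play σ τ v s))
    (ho : G.TopOdd (G.play σ τ (G.play σ τ v s))) : theta G top σ τ v = .neg := by
  obtain ⟨i₀, hodd, hmax⟩ := ho
  rw [theta, dif_neg (not_exists.2 hreach), if_neg]
  rintro ⟨q, hq, heven, hdom⟩
  obtain ⟨i, rfl⟩ := (infOft_iff hk hx).1 hq
  have := le_antisymm (hmax i) (hdom _ ((infOft_iff hk hx).2 ⟨i₀, rfl⟩))
  exact Int.not_even_iff_odd.mpr hodd (this ▸ heven)

theorem exists_play_eq_top (hfin : {w | ∃ u, G.E u w}.Finite) (hσ : G.Admissible0 top σ)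
    (hτ : G.Admissible1 top τ) (v : V) : ∃ m, G.play σ τ v m = top := by
  by_contra! hreach
  obtain ⟨s, k, hk, hx⟩ := exists_isPeriodicPt_play hfin hσ.1 hτ.1 v
  have havoid : ∀ i, G.play σ τ (G.play σ τ v s) i ≠ top := fun i => by
    rw [← play_add]; exact hreach _
  obtain ⟨i₀, he, hmax₀⟩ := hσ.2 k _ (isCycle_E0 hτ.1 hk hx) havoid
  obtain ⟨i₁, ho, hmax₁⟩ := hτ.2 k _ (isCycle_E1 hσ.1 hk hx) havoid
  exact Int.not_even_iff_odd.mpr ho (le_antisymm (hmax₀ i₁) (hmax₁ i₀) ▸ he)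

theorem exists_theta_eq_fin_of_optCounter1 (hfin : {w | ∃ u, G.E u w}.Finite)
    (hσ : G.Admissible0 top σ) (hτ : G.Admissible1 top τ) {τbar : V → V}
    (hτbar : OptCounter1 G top σ τbar) (v : V) : ∃ B, theta G top σ τbar v = .fin B := by
  by_cases hreach : ∃ m, G.play σ τbar v m = top
  · exact exists_theta_eq_fin hreach
  simp only [not_exists] at hreach
  obtain ⟨B, hB⟩ := exists_theta_eq_fin (exists_play_eq_top hfin hσ hτ v)
  obtain ⟨s, k, hk, hx⟩ := exists_isPeriodicPt_play hfin hσ.1 hτbar.1 v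
  have hpos := theta_eq_pos hreach hk hx <| hσ.2 k _ (isCycle_E0 hτbar.1 hk hx) fun i => by
    rw [← play_add]; exact hreach _
  have hle := hτbar.2 τ hτ.1 v
  rw [hpos, hB] at hle
  rcases hle with h | h <;> cases h

theorem exists_theta_eq_fin_of_optCounter0 (hfin : {w | ∃ u, G.E u w}.Finite)
    (hσ : G.Admissible0 top σ) (hτ : G.Admissible1 top τ) {σbar : V → V}
    (hσbar : OptCounter0 G top τ σbar) (v : V) : ∃ B, theta G top σbar τ v = .fin B := by
  by_cases hreach : ∃ m, G.play σbar τ v m = top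
  · exact exists_theta_eq_fin hreach
  simp only [not_exists] at hreach
  obtain ⟨B, hB⟩ := exists_theta_eq_fin (exists_play_eq_top hfin hσ hτ v)
  obtain ⟨s, k, hk, hx⟩ := exists_isPeriodicPt_play hfin hσbar.1 hτ.1 v
  have hneg := theta_eq_neg hreach hk hx <| hτ.2 k _ (isCycle_E1 hσbar.1 hk hx) fun i => by
    rw [← play_add]; exact hreach _
  have hle := hσbar.2 σ hσ.1 v
  rw [hneg, hB] at hle
  rcases hle with h | h <;> cases h

theorem theta_switch [DecidableEq V] {v w : V} {B C : ℤ → ℕ}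
    (htop : G.step σ τ top = top) (hstep : G.step σ' τ' = update (G.step σ τ) v w)
    (hvtop : v ≠ top) (hB : theta G top σ τ v = .fin B) (hC : theta G top σ τ w = .fin C) :
    theta G top σ' τ' v = .fin (Pi.single (G.p v) 1 + C) ∨
      ∃ k, 0 < k ∧ IsPeriodicPt (G.step σ' τ') k v ∧ (∀ i, G.play σ' τ' v i ≠ top) ∧
        Pi.single (G.p v) 1 + C = B + G.visitCount (G.play σ' τ' v) k := by
  have hshift : ∀ t, (∀ t' < t, G.play σ τ w t' ≠ v) →
      G.play σ' τ' v (t + 1) = G.play σ τ w t := fun t ht => by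
    simp only [play, iterate_succ_apply, hstep, update_self]
    exact iterate_update_eq ht
  by_cases hret : ∃ m, G.play σ τ w m = v
  · right
    classical
    set m := Nat.find hret
    have hm : G.play σ τ w m = v := Nat.find_spec hret
    have hmin : ∀ t < m, G.play σ τ w t ≠ v := fun t => Nat.find_min hret
    have hper : IsPeriodicPt (G.step σ' τ') (m + 1) v := by
      change G.play σ' τ' v (m + 1) = v
      rw [hshift m hmin, hm]
    have htop' : G.step σ' τ' top = top := by rw [hstep, update_of_ne hvtop.symm, htop]
    have hpre : ∀ t < m, G.play σ τ w t ≠ top := fun t ht h => hvtop <| by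
      rw [← hm, ← Nat.add_sub_cancel' ht.le, play_add, h]
      exact iterate_fixed htop _
    refine ⟨m + 1, m.succ_pos, hper, iterate_ne_of_isPeriodicPt htop' m.succ_pos hper hvtop, ?_⟩
    rw [theta_shift (by rw [hm]; exact hB) hpre, EV.fin.injEq] at hC
    rw [← hC, visitCount_succ',
      visitCount_congr fun t ht => hshift t fun t' h' => hmin t' (h'.trans ht)]
    change _ = B + (_ + Pi.single (G.p v) 1)
    abel
  · left
    simp only [not_exists] at hret
    have heq : G.play σ' τ' (G.step σ' τ' v) = G.play σ τ w :=
      funext fun t => hshift t fun t' _ => hret t'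
    exact theta_step (by rw [theta_congr heq, hC]) hvtop

theorem ele_theta_of_optCounter1 (hsink : ∀ w, G.E top w → w = top) (hσ : G.Admissible0 top σ)
    {τbar : V → V} (hτbar : OptCounter1 G top σ τbar) {v w : V} (hv : G.isP0 v = false)
    (hvtop : v ≠ top) (hvw : G.E v w) {B C : ℤ → ℕ}
    (hB : theta G top σ τbar v = .fin B) (hC : theta G top σ τbar w = .fin C) :
    ele (.fin B) (.fin (Pi.single (G.p v) 1 + C)) := by
  classical
  have htop : G.step σ τbar top = top := hsink _ (E_step hσ.1 hτbar.1 top)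
  have hvalid := hτbar.1.update hvw
  rcases theta_switch htop (step_update_right hv) hvtop hB hC with h | ⟨k, hk, hper, havoid, hsum⟩
  · rw [← hB, ← h]
    exact hτbar.2 _ hvalid v
  · have hcyc := isCycle_E0 hvalid hk hper
    obtain ⟨i, he, hmax⟩ := hσ.2 k _ hcyc havoid
    rw [hsum]
    exact Or.inl (vlt_self_add (isTopPriority_visitCount hk hcyc.2.2 hmax) he B)

theorem ele_theta_of_optCounter0 (hsink : ∀ w, G.E top w → w = top) (hτ : G.Admissible1 top τ)
    {σbar : V → V} (hσbar : OptCounter0 G top τ σbar) {v w : V} (hv : G.isP0 v = true)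
    (hvtop : v ≠ top) (hvw : G.E v w) {B C : ℤ → ℕ}
    (hB : theta G top σbar τ v = .fin B) (hC : theta G top σbar τ w = .fin C) :
    ele (.fin (Pi.single (G.p v) 1 + C)) (.fin B) := by
  classical
  have htop : G.step σbar τ top = top := hsink _ (E_step hσbar.1 hτ.1 top)
  have hvalid := hσbar.1.update hvw
  rcases theta_switch htop (step_update_left hv) hvtop hB hC with h | ⟨k, hk, hper, havoid, hsum⟩
  · rw [← hB, ← h]
    exact hσbar.2 _ hvalid v
  · have hcyc := isCycle_E1 hvalid hk hper
    obtain ⟨i, ho, hmax⟩ := hτ.2 k _ hcyc havoid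
    rw [hsum]
    exact Or.inl (vlt_add_self (isTopPriority_visitCount hk hcyc.2.2 hmax) ho B)

end PGame

section GameN

open PGame

theorem GameN_p_true {n i : ℕ} (h1 : 1 ≤ i) (h2 : i ≤ n) :
    (GameN n).p (true, i) = 2 * (i : ℤ) + 1 := by
  simp [GameN, pN, h1, h2]

theorem GameN_p_false {n i : ℕ} (h1 : 1 ≤ i) (h2 : i ≤ n + 1) :
    (GameN n).p (false, i) = 2 * (i : ℤ) + 2 := by
  simp [GameN, pN, h1, h2]

theorem EN_snd_le {n : ℕ} {u w : VN} (h : EN n u w) : w.2 ≤ n + 2 := by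
  obtain ⟨b, i⟩ := u
  cases b <;> simp only [EN] at h <;> split_ifs at h <;> grind

theorem GameN_finite_targets (n : ℕ) : {w | ∃ u, (GameN n).E u w}.Finite :=
  (Set.finite_univ.prod (Set.finite_Iic (n + 2))).subset fun _ ⟨_, h⟩ =>
    ⟨trivial, EN_snd_le h⟩

theorem GameN_sink {n : ℕ} (w : VN) (h : (GameN n).E (true, n + 1) w) : w = (true, n + 1) := by
  simpa [GameN, EN] using h

theorem EN_succ (b : Bool) {n i : ℕ} (h1 : 1 ≤ i) (h2 : i ≤ n) : EN n (b, i) (b, i + 1) := by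
  cases b <;> simp only [EN] <;> split_ifs <;> simp <;> omega

theorem EN_flip_succ (b : Bool) {n i : ℕ} (h1 : 1 ≤ i) (h2 : i ≤ n) :
    EN n (b, i) (!b, i + 1) := by
  cases b <;> simp only [EN] <;> split_ifs <;> simp <;> omega

theorem EN_back (b : Bool) {n i : ℕ} (h1 : 2 ≤ i) (h2 : i ≤ n) : EN n (b, i) (b, 1) := by
  cases b <;> simp only [EN] <;> split_ifs <;> simp <;> omega

theorem EN_cases {b : Bool} {n i : ℕ} {w : VN} (h1 : 1 ≤ i) (h2 : i ≤ n) (h : EN n (b, i) w) :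
    (2 ≤ i ∧ w = (b, 1)) ∨ w = (b, i + 1) ∨ w = (!b, i + 1) := by
  cases b <;> simp only [EN] at h <;> split_ifs at h <;> grind

def RunsStraight (s : VN → VN) (b : Bool) (k : ℕ) : Prop :=
  ∀ l, 1 ≤ l → l < k → s (b, l) = (b, l + 1)

theorem RunsStraight.step_mod {s : VN → VN} {b : Bool} {k : ℕ} (hrun : RunsStraight s b k)
    (hback : s (b, k) = (b, 1)) (hk : 0 < k) (t : ℕ) :
    s (b, t % k + 1) = (b, (t + 1) % k + 1) := by
  rw [← Nat.mod_add_mod]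
  rcases lt_or_eq_of_le (show t % k + 1 ≤ k from Nat.mod_lt t hk) with hlt | heq
  · rw [Nat.mod_eq_of_lt hlt, hrun _ (by omega) hlt]
  · rw [heq, Nat.mod_self, hback]

theorem not_back_of_runsStraight_true {n k : ℕ} {σ : VN → VN}
    (hσ : (GameN n).Admissible0 (true, n + 1) σ) (hk : 0 < k) (hkn : k ≤ n)
    (hrun : RunsStraight σ true k) : σ (true, k) ≠ (true, 1) := by
  intro hback
  have hlt (t : ℕ) : t % k + 1 ≤ n := by have := Nat.mod_lt t hk; omega
  have hcyc : IsCycle ((GameN n).E0 σ) k fun t => (true, t % k + 1) :=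
    ⟨hk, fun t => by simp [E0, GameN, hrun.step_mod hback hk t], fun t => by simp⟩
  obtain ⟨i, he, -⟩ := hσ.2 k _ hcyc fun t => by simpa using (hlt t).trans_lt n.lt_succ_self |>.ne
  rw [GameN_p_true (by omega) (hlt i)] at he
  exact Int.not_even_iff_odd.mpr ⟨_, rfl⟩ he

theorem not_back_of_runsStraight_false {n k : ℕ} {τ : VN → VN}
    (hτ : (GameN n).Admissible1 (true, n + 1) τ) (hk : 0 < k) (hkn : k ≤ n)
    (hrun : RunsStraight τ false k) : τ (false, k) ≠ (false, 1) := by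
  intro hback
  have hlt (t : ℕ) : t % k + 1 ≤ n := by have := Nat.mod_lt t hk; omega
  have hcyc : IsCycle ((GameN n).E1 τ) k fun t => (false, t % k + 1) :=
    ⟨hk, fun t => by simp [E1, GameN, hrun.step_mod hback hk t], fun t => by simp⟩
  obtain ⟨i, ho, -⟩ := hτ.2 k _ hcyc fun t => by simp
  rw [GameN_p_false (by omega) (by linarith [hlt i])] at ho
  exact Int.not_odd_iff_even.mpr ⟨_ + 1, by ring⟩ ho

theorem climb_of_closed {n j : ℕ} {b : Bool} {R : VN → Prop} (hjn : j ≤ n)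
    (hany : ∀ i w, 1 ≤ i → i < j → EN n (!b, i) w → R (!b, i) → R w)
    {i : ℕ} (hi : 1 ≤ i) (hij : i < j) (hR : R (!b, i)) : R (b, j) := by
  -- along the path `(!b, i) → (!b, i + 1) → ⋯ → (!b, j - 1) → (b, j)`
  induction hd : j - (i + 1) generalizing i with
  | zero =>
    obtain rfl : j = i + 1 := by omega
    simpa using hany i _ hi hij (EN_flip_succ _ hi (by omega)) hR
  | succ d ih =>
    exact ih (by omega) (by omega) (hany i _ hi hij (EN_succ _ hi (by omega)) hR) (by omega)

theorem runsStraight_of_closed {n j : ℕ} {b : Bool} {s : VN → VN} {R : VN → Prop}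
    (hj2 : 2 ≤ j) (hjn : j ≤ n) (hs : ∀ i, 1 ≤ i → i ≤ n → EN n (b, i) (s (b, i)))
    (hback : ∀ i, 1 ≤ i → i ≤ n → RunsStraight s b i → s (b, i) ≠ (b, 1))
    (h1 : R (b, 1)) (hj : ¬ R (b, j))
    (hdet : ∀ i, 1 ≤ i → i < j → R (b, i) → R (s (b, i)))
    (hany : ∀ i w, 1 ≤ i → i < j → EN n (!b, i) w → R (!b, i) → R w) :
    RunsStraight s b (j - 1) ∧ R (b, j - 1) ∧ s (b, j - 1) = (!b, j) := by
  have hstep : ∀ i, 1 ≤ i → i < j → RunsStraight s b i →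
      s (b, i) = (b, i + 1) ∨ s (b, i) = (!b, i + 1) := fun i hi hij hrun => by
    rcases EN_cases hi (by omega) (hs i hi (by omega)) with ⟨-, h⟩ | h | h
    · exact absurd h (hback i hi (by omega) hrun)
    · exact Or.inl h
    · exact Or.inr h
  have hinv : ∀ i, 1 ≤ i → i < j → RunsStraight s b i ∧ R (b, i) := by
    intro i hi hij
    induction i with
    | zero => omega
    | succ i ih =>
      rcases Nat.eq_zero_or_pos i with rfl | hi'
      · exact ⟨fun l h1 h2 => by omega, h1⟩
      obtain ⟨hrun, hR⟩ := ih hi' (by omega)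
      rcases hstep i hi' (by omega) hrun with h | h
      · refine ⟨fun l hl1 hl2 => ?_, h ▸ hdet i hi' (by omega) hR⟩
        rcases Nat.lt_succ_iff_lt_or_eq.1 hl2 with hl | rfl
        · exact hrun l hl1 hl
        · exact h
      · exact absurd (climb_of_closed hjn hany (by omega) hij (h ▸ hdet i hi' (by omega) hR)) hj
  obtain ⟨hrun, hR⟩ := hinv (j - 1) (by omega) (by omega)
  have hj1 : j - 1 + 1 = j := by omega
  refine ⟨hrun, hR, ?_⟩
  rcases hstep (j - 1) (by omega) (by omega) hrun with h | h
  · exact absurd (hj1 ▸ h ▸ hdet (j - 1) (by omega) (by omega) hR) hj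
  · exact hj1 ▸ h

theorem runsStraight_of_improving_switch_a {n j : ℕ} (hj2 : 2 ≤ j) (hjn : j ≤ n)
    {σ τ σbar : VN → VN} (hσ : (GameN n).Admissible0 (true, n + 1) σ)
    (hτ : (GameN n).Admissible1 (true, n + 1) τ) (hσj : σ (true, j) = (true, j + 1))
    (hσbar : OptCounter1 (GameN n) (true, n + 1) σ σbar)
    (himp : elt (theta (GameN n) (true, n + 1) σ σbar (σ (true, j)))
      (theta (GameN n) (true, n + 1) σ σbar (true, 1))) :
    RunsStraight σ true (j - 1) ∧ σ (true, j - 1) = (false, j) := by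
  choose Ξ hΞ using exists_theta_eq_fin_of_optCounter1 (GameN_finite_targets n) hσ hτ hσbar
  have hdet (i : ℕ) (h1 : 1 ≤ i) (h2 : i ≤ n) :
      Ξ (true, i) = Pi.single (2 * (i : ℤ) + 1) 1 + Ξ (σ (true, i)) := by
    have h := theta_step (v := (true, i)) (hΞ (σ (true, i))) (by simp; omega)
    rwa [hΞ, GameN_p_true h1 h2, EV.fin.injEq] at h
  have hdetR (i : ℕ) (h1 : 1 ≤ i) (h2 : i < j)
      (hR : LeUpTo (2 * (j : ℤ) + 1) (Ξ (true, 1)) (Ξ (true, i))) :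
      LeUpTo (2 * (j : ℤ) + 1) (Ξ (true, 1)) (Ξ (σ (true, i))) := by
    refine hR.trans_ele (p := 2 * (i : ℤ) + 1) ?_ (by omega)
    rw [hdet i h1 (by omega)]
    exact Or.inr rfl
  have hanyR (i : ℕ) (w : VN) (h1 : 1 ≤ i) (h2 : i < j) (hw : EN n (false, i) w)
      (hR : LeUpTo (2 * (j : ℤ) + 1) (Ξ (true, 1)) (Ξ (false, i))) :
      LeUpTo (2 * (j : ℤ) + 1) (Ξ (true, 1)) (Ξ w) := by
    refine hR.trans_ele (p := 2 * (i : ℤ) + 2) ?_ (by omega)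
    rw [← GameN_p_false (n := n) h1 (by omega)]
    exact ele_theta_of_optCounter1 (v := (false, i)) (w := w) GameN_sink hσ hσbar rfl (by simp)
      hw (hΞ _) (hΞ _)
  have hnot : ¬ LeUpTo (2 * (j : ℤ) + 1) (Ξ (true, 1)) (Ξ (true, j)) := by
    rw [hσj, hΞ, hΞ] at himp
    rw [hdet j (by omega) hjn, hσj]
    exact fun h => vlt_asymm himp (h.vlt_of_odd ⟨j, rfl⟩)
  obtain ⟨hrun, -, hlast⟩ := runsStraight_of_closed (b := true) (s := σ)
    (R := fun v => LeUpTo (2 * (j : ℤ) + 1) (Ξ (true, 1)) (Ξ v)) hj2 hjn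
    (fun i _ _ => hσ.1 (true, i) rfl) (fun _ h1 h2 => not_back_of_runsStraight_true hσ h1 h2)
    (LeUpTo.refl _ _) hnot hdetR hanyR
  exact ⟨hrun, hlast⟩

theorem not_improving_switch_d {n j : ℕ} (hj2 : 2 ≤ j) (hjn : j ≤ n) {σ τ τbar : VN → VN}
    (hσ : (GameN n).Admissible0 (true, n + 1) σ) (hτ : (GameN n).Admissible1 (true, n + 1) τ)
    (hτj : τ (false, j) = (false, j + 1)) (hτbar : OptCounter0 (GameN n) (true, n + 1) τ τbar) :
    ¬ elt (theta (GameN n) (true, n + 1) τbar τ (false, 1))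
      (theta (GameN n) (true, n + 1) τbar τ (τ (false, j))) := by
  intro himp
  choose Ξ hΞ using exists_theta_eq_fin_of_optCounter0 (GameN_finite_targets n) hσ hτ hτbar
  have hdet (i : ℕ) (h1 : 1 ≤ i) (h2 : i ≤ n) :
      Ξ (false, i) = Pi.single (2 * (i : ℤ) + 2) 1 + Ξ (τ (false, i)) := by
    have h := theta_step (v := (false, i)) (hΞ (τ (false, i))) (by simp)
    rwa [hΞ, GameN_p_false h1 (by omega), EV.fin.injEq] at h
  have hdetR (i : ℕ) (h1 : 1 ≤ i) (h2 : i ≤ j)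
      (hR : GeUpTo (2 * (j : ℤ) + 2) (Ξ (false, 1)) (Ξ (false, i))) :
      GeUpTo (2 * (j : ℤ) + 2) (Ξ (false, 1)) (Ξ (τ (false, i))) := by
    refine hR.trans_ele (p := 2 * (i : ℤ) + 2) ?_ (by omega)
    rw [hdet i h1 (by omega)]
    exact Or.inr rfl
  have hanyR (i : ℕ) (w : VN) (h1 : 1 ≤ i) (h2 : i ≤ j) (hw : EN n (true, i) w)
      (hR : GeUpTo (2 * (j : ℤ) + 2) (Ξ (false, 1)) (Ξ (true, i))) :
      GeUpTo (2 * (j : ℤ) + 2) (Ξ (false, 1)) (Ξ w) := by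
    refine hR.trans_ele (p := 2 * (i : ℤ) + 1) ?_ (by omega)
    rw [← GameN_p_true (n := n) h1 (by omega)]
    exact ele_theta_of_optCounter0 (v := (true, i)) (w := w) GameN_sink hτ hτbar rfl
      (by simp; omega) hw (hΞ _) (hΞ _)
  have hnot : ¬ GeUpTo (2 * (j : ℤ) + 2) (Ξ (false, 1)) (Ξ (false, j)) := by
    rw [hτj, hΞ, hΞ] at himp
    rw [hdet j (by omega) hjn, hτj]
    exact fun h => vlt_asymm himp (h.vlt_of_even ⟨j + 1, by ring⟩)
  obtain ⟨-, hR, hlast⟩ := runsStraight_of_closed (b := false) (s := τ)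
    (R := fun v => GeUpTo (2 * (j : ℤ) + 2) (Ξ (false, 1)) (Ξ v)) hj2 hjn
    (fun i _ _ => hτ.1 (false, i) rfl) (fun _ h1 h2 => not_back_of_runsStraight_false hτ h1 h2)
    (GeUpTo.refl _ _) hnot (fun i h1 h2 => hdetR i h1 h2.le) (fun i w h1 h2 => hanyR i w h1 h2.le)
  have hRj := hdetR (j - 1) (by omega) (by omega) hR
  rw [hlast] at hRj
  exact hnot <| climb_of_closed (b := false)
    (R := fun v => GeUpTo (2 * (j : ℤ) + 2) (Ξ (false, 1)) (Ξ v)) hjn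
    (fun i w h1 h2 => hanyR i w h1 h2.le) le_rfl (by omega)
    (hanyR j _ (by omega) le_rfl (EN_back true hj2 hjn) hRj)

end GameN

/-- In `G_n` with `σ(a_j) = a_{j+1}` and `τ(d_j) = d_{j+1}`: the edge `(a_j, a_1)` is an
improving move for `σ` only if `σ(a_i) = a_{i+1}` for all `1 ≤ i < j-1` and
`σ(a_{j-1}) = d_j`; and the edge `(d_j, d_1)` is never an improving move for `τ`. -/
theorem stmt14 (n j : ℕ) (h2 : 2 ≤ j) (hjn : j ≤ n)
    (σ τ : VN → VN)
    (hσ : (GameN n).Admissible0 (true, n + 1) σ)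
    (hτ : (GameN n).Admissible1 (true, n + 1) τ)
    (hσj : σ (true, j) = (true, j + 1)) (hτj : τ (false, j) = (false, j + 1))
    (σbar τbar : VN → VN)
    (hσbar : OptCounter1 (GameN n) (true, n + 1) σ σbar)
    (hτbar : OptCounter0 (GameN n) (true, n + 1) τ τbar) :
    (elt (theta (GameN n) (true, n + 1) σ σbar (σ (true, j)))
         (theta (GameN n) (true, n + 1) σ σbar (true, 1)) →
      (∀ i : ℕ, 1 ≤ i → i < j - 1 → σ (true, i) = (true, i + 1)) ∧
      σ (true, j - 1) = (false, j)) ∧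
    ¬ elt (theta (GameN n) (true, n + 1) τbar τ (false, 1))
          (theta (GameN n) (true, n + 1) τbar τ (τ (false, j))) :=
  ⟨runsStraight_of_improving_switch_a h2 hjn hσ hτ hσj hσbar,
    not_improving_switch_d h2 hjn hσ hτ hτj hτbar⟩
end
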